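/- arXiv:2605.18730 — 2 statements merged into one kernel-verified Lean document; each statement's English description precedes it below -/
import Mathlib

section
/- Let 0 < r₁ ≤ r_* < R, let τ > 0 and C₀ ≥ 0, and let φ : ℝ → ℝ be continuous and nonnegative on [r₁, R]. Suppose Y : ℝ → ℝ is continuous and nonnegative on [0, R − r_*], satisfies Y(0) = 0, is differentiable on (0, R − r_*), and satisfies deriv Y ρ ≤ (1/(R − ρ) + C₀·(R − ρ)^(−1−τ))·Y(ρ) + φ(R − ρ)/(R − ρ) for all ρ ∈ (0, R − r_*). Then for all ρ ∈ [0, R − r_*]: (R − ρ)·Y(ρ) ≤ exp(C₀·r₁^(−τ)/τ)·∫_{R−ρ}^{R} φ(σ) dσ. -/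
/-! Setting `Z(ρ) = (R - ρ) Y(ρ)`, the hypothesis becomes the linear differential inequality
`Z' ≤ C₀ (R - ρ)^{-1-τ} Z + φ(R - ρ)`, whose `1/(R - ρ)` term has been absorbed by the weight
`R - ρ`. With the nonnegative, nondecreasing integrating exponent
`A(ρ) = C₀ ∫_{R-ρ}^R σ^{-1-τ} dσ`, the function `∫_{R-ρ}^R φ - e^{-A} Z` is nondecreasing and
vanishes at `0`, so `Z ≤ e^{A} ∫_{R-ρ}^R φ`; finally `A ≤ C₀ r₁^{-τ}/τ`. -/

open Set Real

theorem monotoneOn_Icc_of_hasDerivAt_nonneg {f f' : ℝ → ℝ} {a b : ℝ}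
    (hf : ContinuousOn f (Icc a b)) (hf' : ∀ x ∈ Ioo a b, HasDerivAt f (f' x) x)
    (hf'₀ : ∀ x ∈ Ioo a b, 0 ≤ f' x) : MonotoneOn f (Icc a b) :=
  monotoneOn_of_hasDerivWithinAt_nonneg (convex_Icc a b) hf
    (fun x hx => (hf' x (by rwa [interior_Icc] at hx)).hasDerivWithinAt)
    (fun x hx => hf'₀ x (by rwa [interior_Icc] at hx))

theorem le_exp_mul_of_deriv_le_mul_add {f f' K k G g : ℝ → ℝ} {a b : ℝ}
    (hf : ContinuousOn f (Icc a b)) (hK : ContinuousOn K (Icc a b))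
    (hG : ContinuousOn G (Icc a b))
    (hf' : ∀ x ∈ Ioo a b, HasDerivAt f (f' x) x) (hK' : ∀ x ∈ Ioo a b, HasDerivAt K (k x) x)
    (hG' : ∀ x ∈ Ioo a b, HasDerivAt G (g x) x)
    (hk : ∀ x ∈ Ioo a b, 0 ≤ k x) (hg : ∀ x ∈ Ioo a b, 0 ≤ g x)
    (hle : ∀ x ∈ Ioo a b, f' x ≤ k x * f x + g x) :
    ∀ x ∈ Icc a b, f x ≤ exp (K x - K a) * (f a + (G x - G a)) := by
  have hK_mono : MonotoneOn K (Icc a b) := monotoneOn_Icc_of_hasDerivAt_nonneg hK hK' hk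
  set H : ℝ → ℝ := fun x => exp (-K a) * G x - exp (-K x) * f x
  have hH_mono : MonotoneOn H (Icc a b) := by
    refine monotoneOn_Icc_of_hasDerivAt_nonneg
      (by simp only [H]; fun_prop)
      (fun x hx => ((hG' x hx).const_mul _).sub (((hK' x hx).neg.exp).mul (hf' x hx))) ?_
    intro x hx
    have hKx : exp (-K x) ≤ exp (-K a) :=
      exp_le_exp.mpr (neg_le_neg (hK_mono (left_mem_Icc.mpr (hx.1.trans hx.2).le)
        (Ioo_subset_Icc_self hx) hx.1.le))
    have hfx_weighted : exp (-K x) * (f' x - k x * f x) ≤ exp (-K x) * g x :=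
      mul_le_mul_of_nonneg_left (by linarith [hle x hx]) (exp_pos _).le
    show 0 ≤ exp (-K a) * g x - (exp (-K x) * -k x * f x + exp (-K x) * f' x)
    nlinarith [mul_le_mul_of_nonneg_right hKx (hg x hx)]
  intro x hx
  have hHx := hH_mono (left_mem_Icc.mpr (hx.1.trans hx.2)) hx hx.1
  have hcancel : exp (K x) * exp (-K x) = 1 := by rw [← exp_add, add_neg_cancel, exp_zero]
  have hexp : exp (K x - K a) = exp (K x) * exp (-K a) := by rw [sub_eq_add_neg, exp_add]
  have hweighted : exp (-K x) * f x ≤ exp (-K a) * (f a + (G x - G a)) := by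
    simp only [H] at hHx
    linarith
  calc f x = exp (K x) * (exp (-K x) * f x) := by rw [← mul_assoc, hcancel, one_mul]
    _ ≤ exp (K x) * (exp (-K a) * (f a + (G x - G a))) := by gcongr
    _ = exp (K x - K a) * (f a + (G x - G a)) := by rw [hexp, mul_assoc]

section Primitive

variable {h : ℝ → ℝ} {c R : ℝ}

theorem continuousOn_integral_sub_left (hh : ContinuousOn h (Icc c R)) (hcR : c ≤ R) :
    ContinuousOn (fun ρ => ∫ σ in (R - ρ)..R, h σ) (Icc 0 (R - c)) := by
  have hprim := intervalIntegral.continuousOn_primitive_interval_left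
    (((uIcc_of_le hcR).symm ▸ hh).integrableOn_compact (μ := MeasureTheory.volume) isCompact_uIcc)
  refine hprim.comp (continuousOn_const.sub continuousOn_id) fun ρ hρ => ?_
  rw [uIcc_of_le hcR]
  exact ⟨by linarith [hρ.2], by linarith [hρ.1]⟩

theorem hasDerivAt_integral_sub_left (hh : ContinuousOn h (Icc c R)) {ρ : ℝ}
    (hρ : ρ ∈ Ioo 0 (R - c)) : HasDerivAt (fun ρ => ∫ σ in (R - ρ)..R, h σ) (h (R - ρ)) ρ := by
  have hmem : R - ρ ∈ Ioo c R := ⟨by linarith [hρ.2], by linarith [hρ.1]⟩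
  have hint : IntervalIntegrable h MeasureTheory.volume (R - ρ) R :=
    (hh.mono (Icc_subset_Icc hmem.1.le le_rfl)).intervalIntegrable_of_Icc hmem.2.le
  have hderiv := (intervalIntegral.integral_hasDerivAt_left hint
    ((hh.mono Ioo_subset_Icc_self).stronglyMeasurableAtFilter isOpen_Ioo _ hmem)
    (hh.continuousAt (Icc_mem_nhds hmem.1 hmem.2))).comp ρ ((hasDerivAt_id ρ).const_sub R)
  exact hderiv.congr_deriv (by ring)

end Primitive

theorem integral_rpow_neg_one_sub_le {r₁ r R τ : ℝ} (hr₁ : 0 < r₁) (hr : r₁ ≤ r) (hrR : r ≤ R)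
    (hτ : 0 < τ) : ∫ σ in r..R, σ ^ (-1 - τ) ≤ r₁ ^ (-τ) / τ := by
  have hr0 : 0 < r := hr₁.trans_le hr
  rw [integral_rpow (Or.inr ⟨by linarith, fun h0 => by
      rw [uIcc_of_le hrR] at h0; linarith [h0.1]⟩), show -1 - τ + 1 = -τ by ring,
    div_neg, ← neg_div, neg_sub]
  gcongr
  calc r ^ (-τ) - R ^ (-τ) ≤ r ^ (-τ) := sub_le_self _ (rpow_nonneg (hr0.le.trans hrR) _)
    _ ≤ r₁ ^ (-τ) := rpow_le_rpow_of_nonpos hr₁ hr (neg_nonpos.mpr hτ.le)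

theorem neg_add_mul_le_of_le_inv_add_mul_add_div {r y y' c p : ℝ} (hr : 0 < r)
    (h : y' ≤ (1 / r + c) * y + p / r) : -1 * y + r * y' ≤ c * (r * y) + p := by
  have hr_mul : r * y' ≤ r * ((1 / r + c) * y + p / r) := mul_le_mul_of_nonneg_left h hr.le
  rw [show r * ((1 / r + c) * y + p / r) = y + c * (r * y) + p by field_simp] at hr_mul
  linarith

theorem gradient_estimate_ode_comparison_general (r₁ rstar R τ C₀ : ℝ)
    (hr₁ : 0 < r₁) (h₁ : r₁ ≤ rstar)
    (hτ : 0 < τ) (hC₀ : 0 ≤ C₀)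
    (φ : ℝ → ℝ) (hφc : ContinuousOn φ (Set.Icc r₁ R))
    (hφ0 : ∀ σ ∈ Set.Icc r₁ R, 0 ≤ φ σ)
    (Y : ℝ → ℝ) (hYc : ContinuousOn Y (Set.Icc 0 (R - rstar)))
    (hY00 : Y 0 = 0)
    (hdiff : ∀ ρ ∈ Set.Ioo (0:ℝ) (R - rstar), DifferentiableAt ℝ Y ρ)
    (hineq : ∀ ρ ∈ Set.Ioo (0:ℝ) (R - rstar),
      deriv Y ρ ≤ (1/(R - ρ) + C₀ * (R - ρ) ^ (-1 - τ)) * Y ρ + φ (R - ρ) / (R - ρ)) :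
    ∀ ρ ∈ Set.Icc (0:ℝ) (R - rstar),
      (R - ρ) * Y ρ ≤ Real.exp (C₀ * r₁ ^ (-τ) / τ) * ∫ σ in (R - ρ)..R, φ σ := by
  intro ρ hρ
  have hrR : rstar ≤ R := by linarith [hρ.1, hρ.2]
  have hrρ : r₁ ≤ R - ρ := by linarith [hρ.2]
  have hφc' := hφc.mono (Icc_subset_Icc h₁ le_rfl)
  have hrpow : ContinuousOn (fun σ : ℝ => σ ^ (-1 - τ)) (Icc rstar R) := fun σ hσ =>
    (continuousAt_rpow_const _ _ (Or.inl (hr₁.trans_le (h₁.trans hσ.1)).ne')).continuousWithinAt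
  have hcomp := le_exp_mul_of_deriv_le_mul_add (f := fun s => (R - s) * Y s)
    (K := fun s => C₀ * ∫ σ in (R - s)..R, σ ^ (-1 - τ)) (G := fun s => ∫ σ in (R - s)..R, φ σ)
    ((continuousOn_const.sub continuousOn_id).mul hYc)
    ((continuousOn_integral_sub_left hrpow hrR).const_smul C₀)
    (continuousOn_integral_sub_left hφc' hrR)
    (fun x hx => ((hasDerivAt_id' x).const_sub R).mul (hdiff x hx).hasDerivAt)
    (fun x hx => (hasDerivAt_integral_sub_left hrpow hx).const_mul C₀)
    (fun x hx => hasDerivAt_integral_sub_left hφc' hx)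
    (fun x hx => mul_nonneg hC₀ (rpow_nonneg (by linarith [hx.2]) _))
    (fun x hx => hφ0 _ ⟨by linarith [hx.2], by linarith [hx.1]⟩)
    (fun x hx => neg_add_mul_le_of_le_inv_add_mul_add_div (by linarith [hx.2]) (hineq x hx))
    ρ hρ
  simp only [sub_zero, intervalIntegral.integral_same, mul_zero, hY00, zero_add] at hcomp
  refine hcomp.trans (mul_le_mul_of_nonneg_right (exp_le_exp.mpr ?_) ?_)
  · rw [mul_div_assoc]
    exact mul_le_mul_of_nonneg_left
      (integral_rpow_neg_one_sub_le hr₁ hrρ (by linarith [hρ.1]) hτ) hC₀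
  · exact intervalIntegral.integral_nonneg (by linarith [hρ.1])
      fun σ hσ => hφ0 σ ⟨hrρ.trans hσ.1, hσ.2⟩

/-- Integrating-factor ODE comparison underlying the tangential gradient estimate:
if `Y(0) = 0`, `Y ≥ 0`, and
`Y'(ρ) ≤ (1/(R−ρ) + C₀(R−ρ)^{−1−τ})·Y(ρ) + φ(R−ρ)/(R−ρ)` on `(0, R − r_*)`,
then `(R−ρ)·Y(ρ) ≤ exp(C₀ r₁^{−τ}/τ)·∫_{R−ρ}^{R} φ(σ) dσ`. -/
theorem gradient_estimate_ode_comparison (r₁ rstar R τ C₀ : ℝ)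
    (hr₁ : 0 < r₁) (h₁ : r₁ ≤ rstar) (hrR : rstar < R)
    (hτ : 0 < τ) (hC₀ : 0 ≤ C₀)
    (φ : ℝ → ℝ) (hφc : ContinuousOn φ (Set.Icc r₁ R))
    (hφ0 : ∀ σ ∈ Set.Icc r₁ R, 0 ≤ φ σ)
    (Y : ℝ → ℝ) (hYc : ContinuousOn Y (Set.Icc 0 (R - rstar)))
    (hY0 : ∀ ρ ∈ Set.Icc (0:ℝ) (R - rstar), 0 ≤ Y ρ)
    (hY00 : Y 0 = 0)
    (hdiff : ∀ ρ ∈ Set.Ioo (0:ℝ) (R - rstar), DifferentiableAt ℝ Y ρ)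
    (hineq : ∀ ρ ∈ Set.Ioo (0:ℝ) (R - rstar),
      deriv Y ρ ≤ (1/(R - ρ) + C₀ * (R - ρ) ^ (-1 - τ)) * Y ρ + φ (R - ρ) / (R - ρ)) :
    ∀ ρ ∈ Set.Icc (0:ℝ) (R - rstar),
      (R - ρ) * Y ρ ≤ Real.exp (C₀ * r₁ ^ (-τ) / τ) * ∫ σ in (R - ρ)..R, φ σ :=
  gradient_estimate_ode_comparison_general r₁ rstar R τ C₀ hr₁ h₁ hτ hC₀ φ hφc hφ0 Y hYc hY00 hdiff
    hineq
end

section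
/- Fix m > 0 and δ₀ > 0, and let χ : ℝ → ℝ be continuous with 0 ≤ χ ≤ 1, χ(x) = 0 for x ≤ 1, and χ(x) = 1 for x ≥ 2. For T ∈ ℝ set δ(T) := δ₀·exp(−T/(4m)), and for r > 2m set F(T, r) := T + r + 2m·log(δ(T)/m) + 2m·∫_2^{(r−2m)/δ(T)} χ(y)/y dy. Then for every fixed r > 2m, the function T ↦ F(T, r) is strictly monotone increasing and surjective onto ℝ; in particular it is a bijection from ℝ to ℝ. -/
/-!
Since `log δ(T) = log δ₀ − T/(4m)`, we have `F(T, r) = T/2 + C(r) + 2m ∫₂^{u(T)} χ(y)/y dy`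
with `u(T) = (r − 2m)/δ(T) > 0` increasing in `T`. The integrand is nonnegative on `(0, ∞)`, so
`F(T₂, r) − F(T₁, r) ≥ (T₂ − T₁)/2` for `T₁ ≤ T₂`: the map `T ↦ F(T, r)` is continuous and grows
at least with slope `1/2`, hence is strictly increasing and onto.
-/

/-- The shrinking transition width `δ(T) = δ₀ e^{−T/(4m)}`. -/
noncomputable def schwDelta (m δ₀ T : ℝ) : ℝ := δ₀ * Real.exp (-T / (4 * m))

/-- The graph function of the horizon-penetrating Schwarzschild hypersurfaces
`Σ_T = {v = F(T, r)}` in ingoing Eddington–Finkelstein coordinates. -/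
noncomputable def schwF (m δ₀ : ℝ) (χ : ℝ → ℝ) (T r : ℝ) : ℝ :=
  T + r + 2 * m * Real.log (schwDelta m δ₀ T / m)
    + 2 * m * ∫ y in (2:ℝ)..((r - 2 * m) / schwDelta m δ₀ T), χ y / y

open Set Filter

section LowerSlope

variable {f : ℝ → ℝ} {c : ℝ}

theorem strictMono_of_mul_sub_le (hc : 0 < c) (h : ∀ a b, a ≤ b → c * (b - a) ≤ f b - f a) :
    StrictMono f := fun a b hab => by
  nlinarith [h a b hab.le]

theorem Continuous.surjective_of_mul_sub_le (hf : Continuous f) (hc : 0 < c)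
    (h : ∀ a b, a ≤ b → c * (b - a) ≤ f b - f a) : Function.Surjective f := by
  have hlin : Tendsto (fun x => f 0 + c * x) atTop atTop :=
    tendsto_atTop_add_const_left _ _ (tendsto_id.const_mul_atTop hc)
  have hlin' : Tendsto (fun x => f 0 + c * x) atBot atBot :=
    tendsto_atBot_add_const_left _ _ (tendsto_id.const_mul_atBot hc)
  refine hf.surjective (tendsto_atTop_mono' _ ?_ hlin) (tendsto_atBot_mono' _ ?_ hlin')
  · filter_upwards [eventually_ge_atTop 0] with x hx
    linarith [h 0 x hx]
  · filter_upwards [eventually_le_atBot 0] with x hx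
    linarith [h x 0 hx]

end LowerSlope

section Primitive

variable {g : ℝ → ℝ} {s : Set ℝ} [OrdConnected s] {a : ℝ}

theorem hasDerivAt_integral_of_continuousOn (hs : IsOpen s) (hg : ContinuousOn g s)
    (ha : a ∈ s) {x : ℝ} (hx : x ∈ s) :
    HasDerivAt (fun u => ∫ y in a..u, g y) (g x) x :=
  intervalIntegral.integral_hasDerivAt_right
    ((hg.mono (OrdConnected.uIcc_subset inferInstance ha hx)).intervalIntegrable)
    (hg.stronglyMeasurableAtFilter hs x hx) (hg.continuousAt (hs.mem_nhds hx))

theorem continuousOn_integral_of_continuousOn (hs : IsOpen s) (hg : ContinuousOn g s)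
    (ha : a ∈ s) : ContinuousOn (fun u => ∫ y in a..u, g y) s := fun _ hx =>
  (hasDerivAt_integral_of_continuousOn hs hg ha hx).continuousAt.continuousWithinAt

theorem monotoneOn_integral_of_nonneg (hg : ContinuousOn g s) (hg0 : ∀ x ∈ s, 0 ≤ g x)
    (ha : a ∈ s) : MonotoneOn (fun u => ∫ y in a..u, g y) s := by
  intro x hx z hz hxz
  have hint : ∀ {w}, w ∈ s → IntervalIntegrable g MeasureTheory.volume a w := fun hw =>
    (hg.mono (OrdConnected.uIcc_subset inferInstance ha hw)).intervalIntegrable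
  have hdiff : (∫ y in a..z, g y) - ∫ y in a..x, g y = ∫ y in x..z, g y :=
    intervalIntegral.integral_interval_sub_left (hint hz) (hint hx)
  have hnonneg : 0 ≤ ∫ y in x..z, g y := intervalIntegral.integral_nonneg hxz fun y hy =>
    hg0 y (OrdConnected.out inferInstance hx hz hy)
  simp only
  linarith

end Primitive

section Schwarzschild

variable {m δ₀ : ℝ}

theorem schwDelta_pos (hδ₀ : 0 < δ₀) (T : ℝ) : 0 < schwDelta m δ₀ T :=
  mul_pos hδ₀ (Real.exp_pos _)

theorem antitone_schwDelta (hm : 0 < m) (hδ₀ : 0 ≤ δ₀) : Antitone (schwDelta m δ₀) :=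
  fun _ _ h => mul_le_mul_of_nonneg_left (Real.exp_le_exp.2 (by gcongr)) hδ₀

theorem continuous_schwDelta : Continuous (schwDelta m δ₀) := by
  unfold schwDelta
  fun_prop

theorem two_mul_log_schwDelta_div (hm : 0 < m) (hδ₀ : 0 < δ₀) (T : ℝ) :
    2 * m * Real.log (schwDelta m δ₀ T / m) = 2 * m * Real.log (δ₀ / m) - T / 2 := by
  rw [schwDelta, mul_div_right_comm, Real.log_mul (by positivity) (Real.exp_ne_zero _),
    Real.log_exp]
  field_simp
  ring

theorem schwF_eq (hm : 0 < m) (hδ₀ : 0 < δ₀) (χ : ℝ → ℝ) (T r : ℝ) :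
    schwF m δ₀ χ T r = T / 2 + (r + 2 * m * Real.log (δ₀ / m))
      + 2 * m * ∫ y in (2:ℝ)..((r - 2 * m) / schwDelta m δ₀ T), χ y / y := by
  rw [schwF, add_assoc T, two_mul_log_schwDelta_div hm hδ₀]
  ring

variable {χ : ℝ → ℝ} {r : ℝ}

theorem continuousOn_div_self_Ioi (hχc : Continuous χ) :
    ContinuousOn (fun y => χ y / y) (Ioi 0) :=
  hχc.continuousOn.div continuousOn_id fun _ hy => ne_of_gt hy

theorem continuousOn_integral_div_self (hχc : Continuous χ) :
    ContinuousOn (fun u => ∫ y in (2:ℝ)..u, χ y / y) (Ioi 0) :=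
  continuousOn_integral_of_continuousOn isOpen_Ioi (continuousOn_div_self_Ioi hχc) (by norm_num)

theorem div_schwDelta_pos (hδ₀ : 0 < δ₀) (hr : 2 * m < r) (T : ℝ) :
    0 < (r - 2 * m) / schwDelta m δ₀ T :=
  div_pos (by linarith) (schwDelta_pos hδ₀ T)

theorem monotone_schwF_integral (hm : 0 < m) (hδ₀ : 0 < δ₀) (hχc : Continuous χ)
    (hχ : ∀ x, 0 ≤ χ x) (hr : 2 * m < r) :
    Monotone fun T => ∫ y in (2:ℝ)..((r - 2 * m) / schwDelta m δ₀ T), χ y / y := by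
  have hu : Monotone fun T => (r - 2 * m) / schwDelta m δ₀ T := fun _ _ h =>
    div_le_div_of_nonneg_left (by linarith) (schwDelta_pos hδ₀ _)
      (antitone_schwDelta hm hδ₀.le h)
  have hG := monotoneOn_integral_of_nonneg (s := Ioi 0) (a := 2) (continuousOn_div_self_Ioi hχc)
    (fun y hy => div_nonneg (hχ y) (le_of_lt hy)) (by norm_num)
  exact fun T₁ T₂ h =>
    hG (div_schwDelta_pos hδ₀ hr T₁) (div_schwDelta_pos hδ₀ hr T₂) (hu h)

theorem half_mul_sub_le_schwF_sub (hm : 0 < m) (hδ₀ : 0 < δ₀) (hχc : Continuous χ)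
    (hχ : ∀ x, 0 ≤ χ x) (hr : 2 * m < r) (T₁ T₂ : ℝ) (h : T₁ ≤ T₂) :
    1 / 2 * (T₂ - T₁) ≤ schwF m δ₀ χ T₂ r - schwF m δ₀ χ T₁ r := by
  have := mul_le_mul_of_nonneg_left (monotone_schwF_integral hm hδ₀ hχc hχ hr h)
    (by positivity : (0:ℝ) ≤ 2 * m)
  rw [schwF_eq hm hδ₀, schwF_eq hm hδ₀]
  linarith

theorem continuous_schwF (hm : 0 < m) (hδ₀ : 0 < δ₀) (hχc : Continuous χ) (hr : 2 * m < r) :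
    Continuous fun T => schwF m δ₀ χ T r := by
  have hu : Continuous fun T => (r - 2 * m) / schwDelta m δ₀ T :=
    continuous_const.div continuous_schwDelta fun T => (schwDelta_pos hδ₀ T).ne'
  have hGu := (continuousOn_integral_div_self hχc).comp_continuous hu (div_schwDelta_pos hδ₀ hr)
  simp only [schwF_eq hm hδ₀]
  fun_prop

end Schwarzschild

theorem schwF_time_bijective_general (m δ₀ : ℝ) (hm : 0 < m) (hδ₀ : 0 < δ₀)
    (χ : ℝ → ℝ) (hχc : Continuous χ) (hχ01 : ∀ x, 0 ≤ χ x ∧ χ x ≤ 1) :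
    ∀ r : ℝ, 2 * m < r →
      StrictMono (fun T => schwF m δ₀ χ T r) ∧
      Function.Surjective (fun T => schwF m δ₀ χ T r) ∧
      Function.Bijective (fun T => schwF m δ₀ χ T r) := by
  intro r hr
  have hslope := half_mul_sub_le_schwF_sub hm hδ₀ hχc (fun x => (hχ01 x).1) hr
  have hmono := strictMono_of_mul_sub_le one_half_pos hslope
  have hsurj := (continuous_schwF hm hδ₀ hχc hr).surjective_of_mul_sub_le one_half_pos hslope
  exact ⟨hmono, hsurj, hmono.injective, hsurj⟩

/-- For each fixed `r > 2m`, the map `T ↦ F(T, r)` is strictly increasing and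
surjective onto `ℝ`; in particular it is a bijection. This is what makes the
horizon-penetrating hypersurfaces `Σ_T` a foliation. -/
theorem schwF_time_bijective (m δ₀ : ℝ) (hm : 0 < m) (hδ₀ : 0 < δ₀)
    (χ : ℝ → ℝ) (hχc : Continuous χ) (hχ01 : ∀ x, 0 ≤ χ x ∧ χ x ≤ 1)
    (hχ0 : ∀ x : ℝ, x ≤ 1 → χ x = 0) (hχ1 : ∀ x : ℝ, 2 ≤ x → χ x = 1) :
    ∀ r : ℝ, 2 * m < r →
      StrictMono (fun T => schwF m δ₀ χ T r) ∧
      Function.Surjective (fun T => schwF m δ₀ χ T r) ∧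
      Function.Bijective (fun T => schwF m δ₀ χ T r) :=
  schwF_time_bijective_general m δ₀ hm hδ₀ χ hχc hχ01
end
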